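/- arXiv:0711.4412 — 4 statements merged into one kernel-verified Lean document; each statement's English description precedes it below -/
import Mathlib

section
/- Γ(x) / (√(2π) · x^(x − 1/2) · e^(−x)) tends to 1 as real x tends to infinity. -/
/-!
Write `log Γ(x) = F(x) + ε(x)` with `F(x) = (x - 1/2) log x - x + log √(2π)`. At the integers,
`ε(n) → 0` is Stirling's formula for `n! = n Γ(n)`. Between consecutive integers, log-convexity of
`Γ` squeezes `log Γ(n + t)`, `0 ≤ t ≤ 1`, between `log Γ(n) + t log (n - 1)` and
`log Γ(n) + t log n`, while `F(n + t) - F(n) - t log n = O(1/n)` by `t/(n+t) ≤ log (1 + t/n) ≤ t/n`.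
Hence `ε(n + t) - ε(n) → 0` uniformly in `t`, and `ε(x) → 0`.
-/

open Filter Real Set Topology

theorem tendsto_atTop_of_tendsto_natCast_of_norm_sub_le {E : Type*} [SeminormedAddCommGroup E]
    {f : ℝ → E} {a : E} {g : ℕ → ℝ} (hf : Tendsto (fun n : ℕ => f n) atTop (𝓝 a))
    (hg : Tendsto g atTop (𝓝 0))
    (hfg : ∀ᶠ n : ℕ in atTop, ∀ t ∈ Ico (0 : ℝ) 1, ‖f (n + t) - f n‖ ≤ g n) :
    Tendsto f atTop (𝓝 a) := by
  have hfloor : Tendsto (fun x : ℝ => ⌊x⌋₊) atTop atTop := tendsto_nat_floor_atTop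
  have hdiff : Tendsto (fun x => f x - f ⌊x⌋₊) atTop (𝓝 0) := by
    refine squeeze_zero_norm' ?_ (hg.comp hfloor)
    filter_upwards [hfloor.eventually hfg, eventually_ge_atTop 0] with x hx hx0
    simpa using hx (x - ⌊x⌋₊) ⟨sub_nonneg.2 (Nat.floor_le hx0),
      by linarith [Nat.lt_floor_add_one x]⟩
  simpa using (hf.comp hfloor).add hdiff

noncomputable def stirlingLogApprox (x : ℝ) : ℝ :=
  (x - 1 / 2) * log x - x + log √(2 * π)

theorem exp_stirlingLogApprox {x : ℝ} (hx : 0 < x) :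
    exp (stirlingLogApprox x) = √(2 * π) * x ^ (x - 1 / 2) * exp (-x) := by
  rw [stirlingLogApprox, exp_add, exp_sub, exp_log (by positivity), rpow_def_of_pos hx, exp_neg]
  ring_nf

noncomputable def stirlingLogError (x : ℝ) : ℝ :=
  log (Gamma x) - stirlingLogApprox x

theorem stirlingLogError_natCast {n : ℕ} (hn : n ≠ 0) :
    stirlingLogError n = log (Stirling.stirlingSeq n) - log √π := by
  have hn' : (0 : ℝ) < n := by positivity
  have hfact : log n.factorial = log n + log (Gamma n) := by
    rw [← Gamma_nat_eq_factorial, Gamma_add_one hn'.ne', log_mul hn'.ne' (Gamma_pos_of_pos hn').ne']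
  rw [stirlingLogError, Stirling.log_stirlingSeq_formula, hfact, stirlingLogApprox,
    log_mul two_ne_zero hn'.ne', log_div hn'.ne' (exp_pos 1).ne', log_exp,
    log_sqrt (by positivity), log_sqrt pi_pos.le, log_mul two_ne_zero pi_pos.ne']
  ring

theorem tendsto_stirlingLogError_natCast :
    Tendsto (fun n : ℕ => stirlingLogError n) atTop (𝓝 0) := by
  have h := ((continuousAt_log (by positivity)).tendsto.comp
    Stirling.tendsto_stirlingSeq_sqrt_pi).sub_const (log √π)
  rw [sub_self] at h
  refine h.congr' ?_
  filter_upwards [eventually_ne_atTop 0] with n hn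
  exact (stirlingLogError_natCast hn).symm

theorem log_Gamma_add_one {y : ℝ} (hy : 0 < y) : log (Gamma (y + 1)) = log (Gamma y) + log y := by
  rw [Gamma_add_one hy.ne', log_mul hy.ne' (Gamma_pos_of_pos hy).ne', add_comm]

theorem log_Gamma_natCast_add_le {n : ℕ} (hn : n ≠ 0) {t : ℝ} (ht : t ∈ Icc (0 : ℝ) 1) :
    log (Gamma (n + t)) ≤ log (Gamma n) + t * log n := by
  rcases ht.1.eq_or_lt with rfl | ht0
  · simp
  exact BohrMollerup.f_add_nat_le convexOn_log_Gamma log_Gamma_add_one hn ht0 ht.2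

theorem log_Gamma_natCast_add_ge {n : ℕ} (hn : 2 ≤ n) {t : ℝ} (ht : 0 ≤ t) :
    log (Gamma n) + t * log (n - 1) ≤ log (Gamma (n + t)) := by
  rcases ht.eq_or_lt with rfl | ht0
  · simp
  exact BohrMollerup.f_add_nat_ge convexOn_log_Gamma log_Gamma_add_one hn ht0

theorem abs_stirlingLogApprox_add_sub_le {x t : ℝ} (hx : 1 / 2 ≤ x) (ht : t ∈ Icc (0 : ℝ) 1) :
    |stirlingLogApprox (x + t) - stirlingLogApprox x - t * log x| ≤ 1 / x := by
  obtain ⟨ht0, ht1⟩ := ht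
  have hx0 : 0 < x := by linarith
  set L := log ((x + t) / x) with hL
  have hdiff : stirlingLogApprox (x + t) - stirlingLogApprox x - t * log x
      = (x + t - 1 / 2) * L - t := by
    rw [hL, log_div (by positivity) hx0.ne', stirlingLogApprox, stirlingLogApprox]
    ring
  have hL_le : L ≤ t / x := by
    have := log_le_sub_one_of_pos (show 0 < (x + t) / x by positivity)
    rwa [div_sub_one hx0.ne', add_sub_cancel_left] at this
  have hL_ge : t / (x + t) ≤ L := by
    have := one_sub_inv_le_log_of_pos (show 0 < (x + t) / x by positivity)
    rwa [inv_div, one_sub_div (by positivity), add_sub_cancel_left] at this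
  rw [hdiff, abs_le]
  constructor
  · calc -(1 / x) ≤ -(t / (2 * (x + t))) := by
          rw [neg_le_neg_iff, div_le_div_iff₀ (by positivity) hx0]; nlinarith
      _ = (x + t - 1 / 2) * (t / (x + t)) - t := by field_simp; ring
      _ ≤ (x + t - 1 / 2) * L - t := by gcongr; linarith
  · calc (x + t - 1 / 2) * L - t ≤ (x + t - 1 / 2) * (t / x) - t := by gcongr; linarith
      _ = t * (t - 1 / 2) / x := by field_simp; ring
      _ ≤ 1 / x := by gcongr; nlinarith

theorem abs_stirlingLogError_natCast_add_sub_le {n : ℕ} (hn : 2 ≤ n) {t : ℝ}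
    (ht : t ∈ Icc (0 : ℝ) 1) :
    |stirlingLogError (n + t) - stirlingLogError n| ≤ log n - log (n - 1) + 1 / n := by
  have hn1 : (1 : ℝ) < n := by exact_mod_cast hn
  have hGamma_le := log_Gamma_natCast_add_le (n := n) (by omega) ht
  have hGamma_ge := log_Gamma_natCast_add_ge hn ht.1
  have hstirling := abs_stirlingLogApprox_add_sub_le (x := n) (by linarith) ht
  have hlog_step : t * (log n - log (n - 1)) ≤ log n - log (n - 1) :=
    mul_le_of_le_one_left (sub_nonneg.2 (log_le_log (by linarith) (by linarith))) ht.2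
  unfold stirlingLogError
  rw [abs_le] at hstirling ⊢
  constructor <;> linarith [hstirling.1, hstirling.2]

theorem tendsto_log_natCast_sub_log_sub_one_add_one_div :
    Tendsto (fun n : ℕ => log n - log (n - 1) + 1 / (n : ℝ)) atTop (𝓝 0) := by
  rw [← tendsto_add_atTop_iff_nat 1]
  simpa using tendsto_log_nat_add_one_sub_log.add tendsto_one_div_add_atTop_nhds_zero_nat

theorem tendsto_stirlingLogError_atTop : Tendsto stirlingLogError atTop (𝓝 0) :=
  tendsto_atTop_of_tendsto_natCast_of_norm_sub_le tendsto_stirlingLogError_natCast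
    tendsto_log_natCast_sub_log_sub_one_add_one_div <| by
      filter_upwards [eventually_ge_atTop 2] with n hn t ht
      exact abs_stirlingLogError_natCast_add_sub_le hn (Ico_subset_Icc_self ht)

theorem stirling_gamma :
    Filter.Tendsto (fun x : ℝ => Real.Gamma x /
      (Real.sqrt (2 * Real.pi) * x^(x - 1/2) * Real.exp (-x)))
      Filter.atTop (nhds 1) := by
  have hexp := (continuous_exp.tendsto 0).comp tendsto_stirlingLogError_atTop
  rw [exp_zero] at hexp
  refine hexp.congr' ?_
  filter_upwards [eventually_gt_atTop 0] with x hx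
  rw [Function.comp_apply, stirlingLogError, exp_sub, exp_log (Gamma_pos_of_pos hx),
    exp_stirlingLogApprox hx]
end

section
/- Given the asymptotic relations Γ(n) ~ C·n^(n−1/2)·e^(−n) and Γ(n+1/2) = (2n)!·√π/(4^n·n!) as n → ∞, the constant C must equal √(2π). -/
/-!
For natural `n`, `Γ(n) = n! / n`, so `Γ(n) / (n ^ (n - 1/2) e⁻ⁿ)` is `√2` times the Stirling
sequence `n! / (√(2n) (n/e)ⁿ)`, which tends to `√π` by Wallis' product. Along the naturals the
hypothesis therefore says `√(2π) / C → 1`.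
-/

open Filter Real Topology Stirling

theorem Gamma_natCast_div_rpow_mul_exp_neg {n : ℕ} (hn : n ≠ 0) :
    Gamma n / ((n : ℝ) ^ ((n : ℝ) - 1 / 2) * exp (-n)) = √2 * stirlingSeq n := by
  have hn0 : (0 : ℝ) < n := by exact_mod_cast Nat.pos_of_ne_zero hn
  have hGamma : Gamma n = n.factorial / n := by
    rw [eq_div_iff hn0.ne', mul_comm, ← Gamma_add_one hn0.ne']
    exact_mod_cast Gamma_nat_eq_factorial n
  have hsqrt : √(2 * n) = √2 * √n := sqrt_mul zero_le_two _
  rw [hGamma, stirlingSeq, rpow_sub hn0, rpow_natCast, ← sqrt_eq_rpow, exp_neg, div_pow,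
    ← exp_one_pow, hsqrt]
  field_simp
  exact sq_sqrt hn0.le

theorem tendsto_Gamma_natCast_div_rpow_mul_exp_neg :
    Tendsto (fun n : ℕ => Gamma n / ((n : ℝ) ^ ((n : ℝ) - 1 / 2) * exp (-n))) atTop
      (𝓝 √(2 * π)) := by
  rw [sqrt_mul zero_le_two]
  refine (tendsto_stirlingSeq_sqrt_pi.const_mul √2).congr' ?_
  filter_upwards [eventually_ne_atTop 0] with n hn
  exact (Gamma_natCast_div_rpow_mul_exp_neg hn).symm

theorem stirling_constant_general (C : ℝ)
    (h : Filter.Tendsto (fun x : ℝ => Real.Gamma x / (C * x^(x - 1/2) * Real.exp (-x)))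
      Filter.atTop (nhds 1)) :
    C = Real.sqrt (2 * Real.pi) := by
  have hnat : Tendsto (fun n : ℕ => Gamma n / ((n : ℝ) ^ ((n : ℝ) - 1 / 2) * exp (-n)) / C)
      atTop (𝓝 1) := by
    refine (h.comp tendsto_natCast_atTop_atTop).congr fun n => ?_
    simp only [Function.comp_apply, div_div, mul_assoc, mul_comm C]
  have hlim : √(2 * π) / C = 1 :=
    tendsto_nhds_unique (tendsto_Gamma_natCast_div_rpow_mul_exp_neg.div_const C) hnat
  have hC : C ≠ 0 := by
    rintro rfl
    simp at hlim
  exact ((div_eq_one_iff_eq hC).1 hlim).symm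

theorem stirling_constant (C : ℝ) (hC : 0 < C)
    (h : Filter.Tendsto (fun x : ℝ => Real.Gamma x / (C * x^(x - 1/2) * Real.exp (-x)))
      Filter.atTop (nhds 1)) :
    C = Real.sqrt (2 * Real.pi) :=
  stirling_constant_general C h
end

section
/- For z > 0, log Γ(z) = (z − 1/2)·log z − z + (1/2)·log(2π) + ∑_{n=1}^{∞} B_{2n} / ((2n)(2n−1)·z^(2n−1)) holds as an asymptotic expansion: for each N, the error after truncating the sum at n = N is O(z^(−2N−1)) as z → ∞. State and prove the first-order case: log Γ(z) − ((z − 1/2)·log z − z + (1/2)·log(2π)) − 1/(12z) = O(1/z^3) as z → ∞. -/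
/-!
Write `R z = log Γ(z) - ((z - 1/2) log z - z + log (2π) / 2)`. The functional equation of `Γ` gives
`R z - R (z + 1) = (z + 1/2) log (1 + 1/z) - 1 = ∑_{k ≥ 1} u^(2k) / (2k + 1)` with `u = 1/(2z + 1)`,
so each step lies between the first term `u² / 3` and `∑_{k ≥ 1} u^(2k) / 3 = 1 / (12 z (z + 1))`.
Euler's limit formula for `Γ` together with Stirling's formula for `n!` shows `R (z + n) → 0`, and
summing the steps over `z, z + 1, z + 2, …` yields `1/(12z) - 1/(144 z³) ≤ R z ≤ 1/(12z)`.
-/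

open Filter Topology Finset
open scoped Nat

lemma le_of_tendsto_add_nat_of_add_one_le {α : Type*} [TopologicalSpace α] [Preorder α]
    [OrderClosedTopology α] {a : ℝ → α} {z : ℝ} {L : α} (h : ∀ w ≥ z, a (w + 1) ≤ a w)
    (ha : Tendsto (fun n : ℕ => a (z + n)) atTop (𝓝 L)) : L ≤ a z := by
  have hanti : Antitone fun n : ℕ => a (z + n) := antitone_nat_of_succ_le fun n => by
    rw [Nat.cast_succ, ← add_assoc]
    exact h _ (le_add_of_nonneg_right n.cast_nonneg)
  simpa using hanti.le_of_tendsto ha 0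

namespace Real

noncomputable def stirlingApprox (z : ℝ) : ℝ :=
  (z - 1/2) * log z - z + (1/2) * log (2 * π)

noncomputable def stirlingRemainder (z : ℝ) : ℝ :=
  log (Gamma z) - stirlingApprox z

lemma stirlingApprox_add_sub {y t : ℝ} (hy : 0 < y) (hyt : 0 < y + t) :
    stirlingApprox (y + t) - stirlingApprox y - t * log y
      = (y + t - 1/2) * log (1 + t / y) - t := by
  rw [one_add_div hy.ne', log_div hyt.ne' hy.ne']
  unfold stirlingApprox
  ring

lemma tendsto_stirlingApprox_add_sub (t : ℝ) :
    Tendsto (fun y => stirlingApprox (y + t) - stirlingApprox y - t * log y) atTop (𝓝 0) := by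
  have hlog : Tendsto (fun y : ℝ => log (1 + t / y)) atTop (𝓝 0) := by
    have h1 : Tendsto (fun y : ℝ => 1 + t / y) atTop (𝓝 1) := by
      simpa using tendsto_const_nhds.add (tendsto_const_nhds.div_atTop (tendsto_id (α := ℝ)))
    simpa [Function.comp_def] using (continuousAt_log one_ne_zero).tendsto.comp h1
  have key :=
    ((tendsto_mul_log_one_add_div_atTop t).add (hlog.const_mul (t - 1/2))).sub_const t
  rw [mul_zero, add_zero, sub_self] at key
  refine key.congr' ?_
  filter_upwards [eventually_gt_atTop 0, eventually_gt_atTop (-t)] with y hy hyt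
  rw [stirlingApprox_add_sub hy (by linarith)]
  ring

lemma log_Gamma_add_one {y : ℝ} (hy : 0 < y) : log (Gamma (y + 1)) = log (Gamma y) + log y := by
  rw [Gamma_add_one hy.ne', log_mul hy.ne' (Gamma_pos_of_pos hy).ne', add_comm]

lemma tendsto_log_Gamma_add_nat_succ_sub {x : ℝ} (hx : 0 < x) :
    Tendsto (fun n : ℕ => log (Gamma (x + (n + 1))) - log n ! - x * log n) atTop (𝓝 0) := by
  have h := (tendsto_const_nhds (x := log (Gamma x))).sub (BohrMollerup.tendsto_log_gamma hx)
  rw [sub_self] at h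
  refine h.congr fun n => ?_
  have hsum := BohrMollerup.f_add_nat_eq (f := log ∘ Gamma) (log_Gamma_add_one ·) hx (n + 1)
  simp only [Function.comp_apply, Nat.cast_add_one] at hsum
  rw [hsum, BohrMollerup.logGammaSeq]
  ring

lemma stirlingRemainder_add_nat_succ (x : ℝ) {n : ℕ} (hn : n ≠ 0) :
    stirlingRemainder (x + (n + 1))
      = (log (Gamma (x + (n + 1))) - log n ! - x * log n) + (log (Stirling.stirlingSeq n) - log √π)
        - (stirlingApprox (n + (x + 1)) - stirlingApprox n - (x + 1) * log n) := by
  have hn' : (n : ℝ) ≠ 0 := Nat.cast_ne_zero.mpr hn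
  rw [show (n : ℝ) + (x + 1) = x + (n + 1) by ring]
  unfold stirlingRemainder stirlingApprox
  rw [Stirling.log_stirlingSeq_formula, log_mul two_ne_zero hn', log_div hn' (exp_pos 1).ne',
    log_exp, log_sqrt pi_pos.le, log_mul two_ne_zero pi_ne_zero]
  ring

lemma tendsto_stirlingRemainder_add_nat {x : ℝ} (hx : 0 < x) :
    Tendsto (fun n : ℕ => stirlingRemainder (x + n)) atTop (𝓝 0) := by
  rw [← tendsto_add_atTop_iff_nat 1]
  have hseq : Tendsto (fun n => log (Stirling.stirlingSeq n) - log √π) atTop (𝓝 0) := by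
    have := ((continuousAt_log (by positivity)).tendsto.comp
      Stirling.tendsto_stirlingSeq_sqrt_pi).sub_const (log √π)
    rwa [sub_self] at this
  have h := ((tendsto_log_Gamma_add_nat_succ_sub hx).add hseq).sub
    ((tendsto_stirlingApprox_add_sub (x + 1)).comp tendsto_natCast_atTop_atTop)
  rw [add_zero, sub_zero] at h
  refine h.congr' ?_
  filter_upwards [eventually_ne_atTop 0] with n hn
  rw [Nat.cast_add_one, stirlingRemainder_add_nat_succ x hn]
  rfl

lemma stirlingRemainder_sub_add_one {z : ℝ} (hz : 0 < z) :
    stirlingRemainder z - stirlingRemainder (z + 1) = (z + 1/2) * log (1 + z⁻¹) - 1 := by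
  rw [← one_div, one_add_div hz.ne', log_div (by positivity) hz.ne']
  unfold stirlingRemainder stirlingApprox
  rw [log_Gamma_add_one hz]
  ring

lemma hasSum_stirlingRemainder_sub_add_one {z : ℝ} (hz : 0 < z) :
    HasSum (fun k : ℕ => (1 / (2 * z + 1)) ^ (2 * (k + 1)) / (2 * (k + 1) + 1))
      (stirlingRemainder z - stirlingRemainder (z + 1)) := by
  have h := (hasSum_log_one_add_inv hz).mul_left (z + 1/2)
  have hterm (k : ℕ) : (z + 1/2) * (2 * (1 / (2 * k + 1)) * (1 / (2 * z + 1)) ^ (2 * k + 1))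
      = (1 / (2 * z + 1)) ^ (2 * k) / (2 * k + 1) := by
    rw [pow_succ]
    field_simp
  simp only [hterm] at h
  rw [stirlingRemainder_sub_add_one hz]
  have h1 := (hasSum_nat_add_iff' 1).mpr h
  rw [sum_range_one] at h1
  push_cast at h1
  simpa using h1


lemma stirlingRemainder_sub_add_one_le {z : ℝ} (hz : 0 < z) :
    stirlingRemainder z - stirlingRemainder (z + 1) ≤ 1 / (12 * z) - 1 / (12 * (z + 1)) := by
  have hu : 1 - (1 / (2 * z + 1)) ^ 2 = 4 * z * (z + 1) / (2 * z + 1) ^ 2 := by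
    field_simp
    ring
  have hgeom := ((hasSum_geometric_of_lt_one (sq_nonneg (1 / (2 * z + 1)))
    (by rw [← sub_pos, hu]; positivity)).mul_left ((1 / (2 * z + 1)) ^ 2)).div_const 3
  simp only [← pow_succ'] at hgeom
  have hle (k : ℕ) : (1 / (2 * z + 1)) ^ (2 * (k + 1)) / (2 * (k + 1) + 1)
      ≤ ((1 / (2 * z + 1)) ^ 2) ^ (k + 1) / 3 := by
    rw [pow_mul]
    apply div_le_div_of_nonneg_left (by positivity) (by norm_num)
    linarith [(Nat.cast_nonneg k : (0 : ℝ) ≤ k)]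
  refine (hasSum_le hle (hasSum_stirlingRemainder_sub_add_one hz) hgeom).trans_eq ?_
  rw [hu]
  field_simp
  ring

lemma le_stirlingRemainder_sub_add_one {z : ℝ} (hz : 0 < z) :
    1 / (12 * z) - 1 / (12 * (z + 1)) - (1 / (144 * z ^ 3) - 1 / (144 * (z + 1) ^ 3))
      ≤ stirlingRemainder z - stirlingRemainder (z + 1) := by
  have hfirst := le_hasSum (hasSum_stirlingRemainder_sub_add_one hz) 0 (fun k _ => by positivity)
  norm_num at hfirst
  refine le_trans ?_ hfirst
  -- with `p = z (z + 1)` this reads `12 p² ≤ (3p + 1)(4p + 1)`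
  rw [← sub_nonneg]
  field_simp
  ring_nf
  positivity

lemma abs_stirlingRemainder_sub_le {z : ℝ} (hz : 0 < z) :
    |stirlingRemainder z - 1 / (12 * z)| ≤ 1 / (144 * z ^ 3) := by
  have hinv : Tendsto (fun n : ℕ => (z + n)⁻¹) atTop (𝓝 0) :=
    tendsto_inv_atTop_zero.comp (tendsto_atTop_add_const_left _ z tendsto_natCast_atTop_atTop)
  have hR := tendsto_stirlingRemainder_add_nat hz
  have upper : 0 ≤ 1 / (12 * z) - stirlingRemainder z := by
    refine le_of_tendsto_add_nat_of_add_one_le (a := fun w => 1 / (12 * w) - stirlingRemainder w)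
      (fun w hw => ?_) ?_
    · linarith [stirlingRemainder_sub_add_one_le (hz.trans_le hw)]
    · simpa using ((hinv.const_mul (1 / 12)).sub hR).congr fun n => by ring
  have lower : 0 ≤ stirlingRemainder z - 1 / (12 * z) + 1 / (144 * z ^ 3) := by
    refine le_of_tendsto_add_nat_of_add_one_le
      (a := fun w => stirlingRemainder w - 1 / (12 * w) + 1 / (144 * w ^ 3)) (fun w hw => ?_) ?_
    · linarith [le_stirlingRemainder_sub_add_one (hz.trans_le hw)]
    · simpa using ((hR.sub (hinv.const_mul (1 / 12))).add
        ((hinv.pow 3).const_mul (1 / 144))).congr fun n => by field_simp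
  rw [abs_le]
  constructor <;> linarith

end Real

theorem stirling_first_order :
    (fun z : ℝ => Real.log (Real.Gamma z) -
      ((z - 1/2) * Real.log z - z + (1/2) * Real.log (2 * Real.pi)) - 1/(12*z))
      =O[Filter.atTop] (fun z : ℝ => 1 / z^3) := by
  refine Asymptotics.IsBigO.of_bound (1 / 144) ?_
  filter_upwards [eventually_gt_atTop 0] with z hz
  rw [Real.norm_eq_abs, Real.norm_eq_abs, abs_of_pos (by positivity : 0 < 1 / z ^ 3)]
  calc _ ≤ 1 / (144 * z ^ 3) := Real.abs_stirlingRemainder_sub_le hz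
    _ = 1 / 144 * (1 / z ^ 3) := by ring
end

section
/- For real x ≥ 1, √(2π)·x^(x−1/2)·e^(−x) ≤ Γ(x) ≤ √(2π)·x^(x−1/2)·e^(−x)·e^(1/(12x)). -/
open Real Set Filter Topology

/-!
Write `f(x) = (x + 1/2) log(1 + 1/x) - 1`. Expanding `log(1 + 1/x)` in odd powers of `1/(2x + 1)`
gives `f(x) = Σ_{k ≥ 1} (2x + 1)^(-2k) / (2k + 1)`, so `0 ≤ f(x) ≤ 1/(12x(x + 1))`, and the
telescoping bound makes Binet's series `μ(x) = Σₙ f(x + n)` satisfy `0 ≤ μ(x) ≤ 1/(12x)`.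
The function `G(x) = √(2π) x^(x - 1/2) e^(-x) e^(μ(x))` satisfies `G(x + 1) = x G(x)`, and
`G(1) = 1` because `f(n) = log s(n) - log s(n + 1)` for the Stirling sequence
`s(n) = n! / (√(2n) (n/e)ⁿ) → √π`. It is log-convex since `log G(x) - log √(2π)` is the
pointwise limit of the convex functions `(x + N - 1/2) log(x + N) - (x + N) - Σ_{n < N} log(x + n)`.
By Bohr–Mollerup, `G = Γ`.
-/

theorem convexOn_sum {E ι : Type*} [AddCommGroup E] [Module ℝ E] {s : Set E}
    (hs : Convex ℝ s) (t : Finset ι) {f : ι → E → ℝ} (hf : ∀ i ∈ t, ConvexOn ℝ s (f i)) :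
    ConvexOn ℝ s fun x => ∑ i ∈ t, f i x := by
  classical
  induction t using Finset.induction_on with
  | empty => simpa using convexOn_const 0 hs
  | insert i t hi ih =>
    simp only [Finset.sum_insert hi]
    exact (hf i (t.mem_insert_self i)).add (ih fun j hj => hf j (Finset.mem_insert_of_mem hj))

theorem convexOn_of_tendsto {E ι : Type*} [AddCommGroup E] [Module ℝ E] {s : Set E}
    {l : Filter ι} [l.NeBot] {F : ι → E → ℝ} {f : E → ℝ} (hs : Convex ℝ s)
    (hF : ∀ i, ConvexOn ℝ s (F i)) (hlim : ∀ x ∈ s, Tendsto (fun i => F i x) l (𝓝 (f x))) :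
    ConvexOn ℝ s f := by
  refine ⟨hs, fun x hx y hy a b ha hb hab => ?_⟩
  exact le_of_tendsto_of_tendsto' (hlim _ (hs hx hy ha hb hab))
    (((hlim x hx).const_mul a).add ((hlim y hy).const_mul b))
    fun i => (hF i).2 hx hy ha hb hab

namespace Stirling

noncomputable def binetSummand (x : ℝ) : ℝ := (x + 1 / 2) * log (1 + x⁻¹) - 1

theorem hasSum_binetSummand {x : ℝ} (hx : 0 < x) :
    HasSum (fun k : ℕ => (1 : ℝ) / (2 * ↑(k + 1) + 1) * ((1 / (2 * x + 1)) ^ 2) ^ (k + 1))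
      (binetSummand x) := by
  let g (k : ℕ) := (1 : ℝ) / (2 * k + 1) * ((1 / (2 * x + 1)) ^ 2) ^ k
  change HasSum (fun k => g (k + 1)) _
  rw [hasSum_nat_add_iff, Finset.sum_range_one]
  have h := (hasSum_log_one_add_inv hx).mul_left (x + 1 / 2)
  rw [show binetSummand x + g 0 = (x + 1 / 2) * log (1 + x⁻¹) by simp [binetSummand, g]]
  refine h.congr_fun fun k => ?_
  simp only [g, pow_succ, pow_mul]
  field_simp

theorem binetSummand_nonneg {x : ℝ} (hx : 0 < x) : 0 ≤ binetSummand x :=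
  (hasSum_binetSummand hx).nonneg fun _ => by positivity

theorem binetSummand_le {x : ℝ} (hx : 0 < x) :
    binetSummand x ≤ 1 / (12 * x) - 1 / (12 * (x + 1)) := by
  set r := (1 / (2 * x + 1)) ^ 2 with hr
  have hr1 : r < 1 := by
    rw [hr, div_pow, one_pow, div_lt_one (by positivity)]
    nlinarith
  have hgeom := ((hasSum_geometric_of_lt_one (by positivity) hr1).mul_left r).div_const 3
  have h1r : 1 - r = 4 * x * (x + 1) / (2 * x + 1) ^ 2 := by rw [hr]; field_simp; ring
  rw [show r * (1 - r)⁻¹ / 3 = 1 / (12 * x) - 1 / (12 * (x + 1)) by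
    rw [h1r, hr]; field_simp; ring] at hgeom
  refine hasSum_le (fun j => ?_) (hasSum_binetSummand hx) hgeom
  have : (3 : ℝ) ≤ 2 * ↑(j + 1) + 1 := by push_cast; linarith [j.cast_nonneg (α := ℝ)]
  rw [← pow_succ', div_mul_eq_mul_div, one_mul]
  gcongr

theorem binetSummand_natCast_add_one (n : ℕ) :
    binetSummand (n + 1) = log (stirlingSeq (n + 1)) - log (stirlingSeq (n + 2)) :=
  (hasSum_binetSummand n.cast_add_one_pos).unique (by simpa using log_stirlingSeq_sdiff_hasSum n)

theorem sum_range_binetSummand_le {x : ℝ} (hx : 0 < x) (N : ℕ) :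
    ∑ n ∈ Finset.range N, binetSummand (x + n) ≤ 1 / (12 * x) := by
  let g (n : ℕ) : ℝ := 1 / (12 * (x + n))
  calc ∑ n ∈ Finset.range N, binetSummand (x + n)
      ≤ ∑ n ∈ Finset.range N, (g n - g (n + 1)) :=
        Finset.sum_le_sum fun n _ => by
          simpa [g, add_assoc] using binetSummand_le (x := x + n) (by positivity)
    _ = g 0 - g N := Finset.sum_range_sub' g N
    _ ≤ 1 / (12 * x) := by simp [g]; positivity

theorem summable_binetSummand {x : ℝ} (hx : 0 < x) :
    Summable fun n : ℕ => binetSummand (x + n) :=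
  summable_of_sum_range_le (fun _ => binetSummand_nonneg (by positivity))
    (sum_range_binetSummand_le hx)

/-- Binet's function: `log Γ(x) = (x - 1/2) log x - x + log √(2π) + binet x`. -/
noncomputable def binet (x : ℝ) : ℝ := ∑' n : ℕ, binetSummand (x + n)

theorem binet_nonneg {x : ℝ} (hx : 0 < x) : 0 ≤ binet x :=
  tsum_nonneg fun _ => binetSummand_nonneg (by positivity)

theorem binet_le {x : ℝ} (hx : 0 < x) : binet x ≤ 1 / (12 * x) :=
  Real.tsum_le_of_sum_range_le (fun _ => binetSummand_nonneg (by positivity))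
    (sum_range_binetSummand_le hx)

theorem binet_eq_binetSummand_add {x : ℝ} (hx : 0 < x) :
    binet x = binetSummand x + binet (x + 1) := by
  rw [binet, (summable_binetSummand hx).tsum_eq_zero_add, binet]
  simp [add_assoc, add_comm (1 : ℝ)]

theorem binet_one : binet 1 = 1 - log √(2 * π) := by
  have hsum := (summable_binetSummand one_pos).hasSum.tendsto_sum_nat
  have hpartial (N : ℕ) : ∑ n ∈ Finset.range N, binetSummand (1 + n) =
      log (stirlingSeq 1) - log (stirlingSeq (N + 1)) := by
    simp only [add_comm (1 : ℝ), binetSummand_natCast_add_one]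
    exact Finset.sum_range_sub' (fun n => log (stirlingSeq (n + 1))) N
  simp only [hpartial] at hsum
  have hlim : Tendsto (fun N : ℕ => log (stirlingSeq 1) - log (stirlingSeq (N + 1))) atTop
      (𝓝 (log (stirlingSeq 1) - log √π)) :=
    tendsto_const_nhds.sub
      ((tendsto_stirlingSeq_sqrt_pi.comp (tendsto_add_atTop_nat 1)).log (by positivity))
  rw [binet, tendsto_nhds_unique hsum hlim, stirlingSeq_one, log_div (by positivity) (by positivity),
    log_exp, sqrt_mul zero_le_two, log_mul (by positivity) (by positivity)]
  ring

noncomputable def logStirlingMain (x : ℝ) : ℝ := (x - 1 / 2) * log x - x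

theorem convexOn_logStirlingMain : ConvexOn ℝ (Ioi 0) logStirlingMain := by
  have hmul_log := convexOn_mul_log.subset Ioi_subset_Ici_self (convex_Ioi 0)
  have hneg_log := strictConcaveOn_log_Ioi.concaveOn.neg.smul (c := (1 / 2 : ℝ)) (by norm_num)
  have hneg_id := (concaveOn_id (𝕜 := ℝ) (convex_Ioi (0 : ℝ))).neg
  refine ((hmul_log.add hneg_log).add hneg_id).congr fun x _ => ?_
  simp only [logStirlingMain, Pi.add_apply, Pi.neg_apply, smul_eq_mul, id]
  ring

theorem logStirlingMain_add_one {x : ℝ} (hx : 0 < x) :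
    logStirlingMain (x + 1) = logStirlingMain x + log x + binetSummand x := by
  have hlog : log (1 + x⁻¹) = log (x + 1) - log x := by
    rw [← log_div (by positivity) hx.ne', add_div, div_self hx.ne', one_div]
  rw [logStirlingMain, logStirlingMain, binetSummand, hlog]
  ring

theorem logStirlingMain_add_nat {x : ℝ} (hx : 0 < x) (N : ℕ) :
    logStirlingMain (x + N) =
      logStirlingMain x + ∑ n ∈ Finset.range N, (log (x + n) + binetSummand (x + n)) := by
  induction N with
  | zero => simp
  | succ N ih =>
    rw [Finset.sum_range_succ, Nat.cast_succ, ← add_assoc, logStirlingMain_add_one (by positivity),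
      ih]
    ring

theorem convexOn_logStirlingMain_add_binet :
    ConvexOn ℝ (Ioi 0) fun x => logStirlingMain x + binet x := by
  have comp_add_nat {f : ℝ → ℝ} (hf : ConvexOn ℝ (Ioi 0) f) (c : ℕ) :
      ConvexOn ℝ (Ioi 0) fun x => f (x + c) := by
    refine ((hf.translate_right (c : ℝ)).subset (fun x hx => ?_) (convex_Ioi 0)).congr
      fun x _ => by simp [add_comm]
    simp only [mem_preimage, mem_Ioi] at hx ⊢
    positivity
  refine convexOn_of_tendsto (l := atTop)
    (F := fun (N : ℕ) x => logStirlingMain (x + N) + ∑ n ∈ Finset.range N, -log (x + n))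
    (convex_Ioi 0) (fun N => ?_) fun x (hx : 0 < x) => ?_
  · exact (comp_add_nat convexOn_logStirlingMain N).add <| convexOn_sum (convex_Ioi 0) _
      fun n _ => comp_add_nat strictConcaveOn_log_Ioi.concaveOn.neg n
  · refine ((summable_binetSummand hx).hasSum.tendsto_sum_nat.const_add _).congr fun N => ?_
    simp only [logStirlingMain_add_nat hx, Finset.sum_add_distrib, Finset.sum_neg_distrib]
    ring

theorem Gamma_eq_exp_binet {x : ℝ} (hx : 0 < x) :
    Gamma x = exp (log √(2 * π) + logStirlingMain x + binet x) := by
  refine (eq_Gamma_of_log_convex (f := fun x => exp (log √(2 * π) + logStirlingMain x + binet x))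
    ?_ (fun {y} hy => ?_) (fun _ => exp_pos _) ?_ hx).symm
  · refine ((convexOn_const (log √(2 * π)) (convex_Ioi 0)).add
      convexOn_logStirlingMain_add_binet).congr fun y _ => ?_
    simp [add_assoc]
  · have hstep : log √(2 * π) + logStirlingMain (y + 1) + binet (y + 1) =
        log y + (log √(2 * π) + logStirlingMain y + binet y) := by
      rw [logStirlingMain_add_one hy, binet_eq_binetSummand_add hy]
      ring
    rw [hstep, exp_add, exp_log hy]
  · simp [logStirlingMain, binet_one]
    ring

theorem Gamma_eq_mul_exp_binet {x : ℝ} (hx : 0 < x) :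
    Gamma x = √(2 * π) * x ^ (x - 1 / 2) * exp (-x) * exp (binet x) := by
  rw [Gamma_eq_exp_binet hx, rpow_def_of_pos hx, ← exp_log (x := √(2 * π)) (by positivity)]
  simp only [← exp_add, log_exp, logStirlingMain]
  ring_nf

end Stirling

theorem stirling_two_sided (x : ℝ) (hx : 1 ≤ x) :
    Real.sqrt (2 * Real.pi) * x^(x - 1/2) * Real.exp (-x) ≤ Real.Gamma x ∧
    Real.Gamma x ≤ Real.sqrt (2 * Real.pi) * x^(x - 1/2) * Real.exp (-x) * Real.exp (1/(12*x)) := by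
  have hx₀ : 0 < x := by linarith
  have hmain : 0 ≤ √(2 * π) * x ^ (x - 1 / 2) * exp (-x) := by positivity
  rw [Stirling.Gamma_eq_mul_exp_binet hx₀]
  exact ⟨le_mul_of_one_le_right hmain (one_le_exp_iff.2 (Stirling.binet_nonneg hx₀)),
    mul_le_mul_of_nonneg_left (exp_le_exp.2 (Stirling.binet_le hx₀)) hmain⟩
end
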